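/- There exists a tournament on n vertices containing at least n!/2^{n-1} directed Hamilton paths (Szele). Consequently, any family of directed Hamilton paths of the complete symmetric digraph on n vertices whose pairwise unions each contain a directed 2-cycle has cardinality at most 2^{n-1}. -/
import Mathlib


/-- The arc set of the directed Hamilton path visiting `τ 0, τ 1, …, τ (n-1)` in order. -/
def dirArcs (n : ℕ) (τ : Equiv.Perm (Fin n)) : Set (Fin n × Fin n) :=
  {a | ∃ i : ℕ, ∃ h : i + 1 < n, a = (τ ⟨i, by omega⟩, τ ⟨i + 1, h⟩)}

/-- The union of the directed Hamilton paths `τ` and `φ` contains a directed 2-cycle. -/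
def TwoCycleInUnion (n : ℕ) (τ φ : Equiv.Perm (Fin n)) : Prop :=
  ∃ u v : Fin n, u ≠ v ∧
    (u, v) ∈ dirArcs n τ ∪ dirArcs n φ ∧ (v, u) ∈ dirArcs n τ ∪ dirArcs n φ

/-- `T` is a tournament on `Fin n`: an orientation of `K_n`. -/
def IsTournament (n : ℕ) (T : Fin n → Fin n → Prop) : Prop :=
  (∀ u, ¬ T u u) ∧ ∀ u v : Fin n, u ≠ v → (T u v ↔ ¬ T v u)

/-- The directed Hamilton path `τ` uses only arcs of the digraph `T`. -/
def IsDirHamPathOf (n : ℕ) (T : Fin n → Fin n → Prop) (τ : Equiv.Perm (Fin n)) : Prop :=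
  ∀ i : ℕ, ∀ h : i + 1 < n, T (τ ⟨i, by omega⟩) (τ ⟨i + 1, h⟩)



namespace SzeleAux

variable {n : ℕ}

/-- The tournament determined by the bit function `F` (only the lower-triangular
bits matter). -/
def TofF (F : Fin n × Fin n → Bool) (u v : Fin n) : Prop :=
  (u < v ∧ F (u, v) = true) ∨ (v < u ∧ F (v, u) = false)

lemma TofF_iff_lt {F : Fin n × Fin n → Bool} {u v : Fin n} (h : u < v) :
    TofF F u v ↔ F (u, v) = true := by
  unfold TofF
  simp [h, asymm h]

lemma TofF_iff_gt {F : Fin n × Fin n → Bool} {u v : Fin n} (h : v < u) :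
    TofF F u v ↔ F (v, u) = false := by
  unfold TofF
  simp [h, asymm h]

lemma tournament_TofF (F : Fin n × Fin n → Bool) : IsTournament n (TofF F) := by
  constructor
  · rintro u (⟨h, _⟩ | ⟨h, _⟩) <;> exact lt_irrefl u h
  · intro u v huv
    rcases lt_or_gt_of_ne huv with h | h
    · rw [TofF_iff_lt h, TofF_iff_gt h]
      simp
    · rw [TofF_iff_gt h, TofF_iff_lt h]
      simp

def idxa (j : Fin (n - 1)) : Fin n := ⟨j.1, by have := j.2; omega⟩
def idxb (j : Fin (n - 1)) : Fin n := ⟨j.1 + 1, by have := j.2; omega⟩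

def posOf (τ : Equiv.Perm (Fin n)) (j : Fin (n - 1)) : Fin n × Fin n :=
  if τ (idxa j) < τ (idxb j) then (τ (idxa j), τ (idxb j)) else (τ (idxb j), τ (idxa j))

def valOf (τ : Equiv.Perm (Fin n)) (j : Fin (n - 1)) : Bool :=
  decide (τ (idxa j) < τ (idxb j))

lemma ne_ab (τ : Equiv.Perm (Fin n)) (j : Fin (n - 1)) : τ (idxa j) ≠ τ (idxb j) := by
  intro h
  have := τ.injective h
  simp [idxa, idxb, Fin.ext_iff] at this

lemma posOf_inj (τ : Equiv.Perm (Fin n)) : Function.Injective (posOf τ) := by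
  intro j k h
  have hj2 := j.2
  have hk2 := k.2
  unfold posOf at h
  split_ifs at h with h1 h2 h2 <;> rw [Prod.ext_iff] at h <;> obtain ⟨ha, hb⟩ := h
  · have e1 := τ.injective ha
    simp [idxa, Fin.ext_iff] at e1
    exact Fin.ext e1
  · have e1 := τ.injective ha
    have e2 := τ.injective hb
    simp [idxa, idxb, Fin.ext_iff] at e1 e2
    omega
  · have e1 := τ.injective ha
    have e2 := τ.injective hb
    simp [idxa, idxb, Fin.ext_iff] at e1 e2
    omega
  · have e1 := τ.injective ha
    simp [idxb, Fin.ext_iff] at e1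
    exact Fin.ext e1

lemma ham_iff (F : Fin n × Fin n → Bool) (τ : Equiv.Perm (Fin n)) :
    IsDirHamPathOf n (TofF F) τ ↔ ∀ j : Fin (n - 1), F (posOf τ j) = valOf τ j := by
  constructor
  · intro H j
    have h : j.1 + 1 < n := by have := j.2; omega
    have hT : TofF F (τ (idxa j)) (τ (idxb j)) := H j.1 h
    rcases lt_or_gt_of_ne (ne_ab τ j) with hab | hab
    · rw [TofF_iff_lt hab] at hT
      simp [posOf, valOf, hab, hT]
    · rw [TofF_iff_gt hab] at hT
      simp [posOf, valOf, hab, asymm hab, hT]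
  · intro H i h
    have hi : i < n - 1 := by omega
    have hj := H ⟨i, hi⟩
    show TofF F (τ (idxa ⟨i, hi⟩)) (τ (idxb ⟨i, hi⟩))
    rcases lt_or_gt_of_ne (ne_ab τ ⟨i, hi⟩) with hab | hab
    · rw [TofF_iff_lt hab]
      simpa [posOf, valOf, hab] using hj
    · rw [TofF_iff_gt hab]
      simpa [posOf, valOf, asymm hab] using hj

/-- Functions constrained on a set are equivalent to functions on the complement. -/
def agreeEquiv {α β : Type*} (p : α → Prop) [DecidablePred p] (g : α → β) :
    {F : α → β // ∀ a, p a → F a = g a} ≃ ({a // ¬ p a} → β) where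
  toFun F a := F.1 a.1
  invFun h := ⟨fun a => if ha : p a then g a else h ⟨a, ha⟩, fun a ha => dif_pos ha⟩
  left_inv := by
    rintro ⟨F, hF⟩
    apply Subtype.ext
    funext a
    by_cases ha : p a
    · simpa [dif_pos ha] using (hF a ha).symm
    · simp [dif_neg ha]
  right_inv h := by
    funext a
    exact dif_neg a.2

lemma count_ham (τ : Equiv.Perm (Fin n)) :
    Nat.card {F : Fin n × Fin n → Bool // IsDirHamPathOf n (TofF F) τ}
      = 2 ^ (n * n - (n - 1)) := by
  classical
  set g : Fin n × Fin n → Bool :=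
    Function.extend (posOf τ) (valOf τ) (fun _ => false) with hg
  have key : ∀ F : Fin n × Fin n → Bool,
      IsDirHamPathOf n (TofF F) τ ↔ ∀ a, a ∈ Set.range (posOf τ) → F a = g a := by
    intro F
    rw [ham_iff]
    constructor
    · rintro H a ⟨j, rfl⟩
      rw [hg, (posOf_inj τ).extend_apply]
      exact H j
    · intro H j
      have := H (posOf τ j) ⟨j, rfl⟩
      rwa [hg, (posOf_inj τ).extend_apply] at this
  have e1 : {F : Fin n × Fin n → Bool // IsDirHamPathOf n (TofF F) τ} ≃
      ({a : Fin n × Fin n // ¬ a ∈ Set.range (posOf τ)} → Bool) :=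
    (Equiv.subtypeEquivRight key).trans
      (agreeEquiv (fun a => a ∈ Set.range (posOf τ)) g)
  rw [Nat.card_congr e1]
  have h1 : Nat.card {a : Fin n × Fin n // a ∈ Set.range (posOf τ)} = n - 1 := by
    have h2 := Nat.card_range_of_injective (posOf_inj τ)
    rw [show Nat.card (Fin (n - 1)) = n - 1 from by simp] at h2
    exact h2
  have hc : Nat.card {a : Fin n × Fin n // ¬ a ∈ Set.range (posOf τ)} = n * n - (n - 1) := by
    rw [Nat.card_eq_fintype_card, Fintype.card_subtype_compl,
      show Fintype.card {a : Fin n × Fin n // a ∈ Set.range (posOf τ)} = n - 1 from by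
        rw [← Nat.card_eq_fintype_card]; exact h1]
    simp
  rw [Nat.card_eq_fintype_card, Fintype.card_fun, Fintype.card_bool,
    ← Nat.card_eq_fintype_card, hc]

lemma sub_one_le_sq : n - 1 ≤ n * n := by
  rcases n with _ | m
  · simp
  · have h : m + 1 ≤ (m + 1) * (m + 1) := Nat.le_mul_of_pos_left _ (Nat.succ_pos m)
    omega

lemma sum_count :
    ∑ F : Fin n × Fin n → Bool,
      Nat.card {τ : Equiv.Perm (Fin n) // IsDirHamPathOf n (TofF F) τ}
      = n.factorial * 2 ^ (n * n - (n - 1)) := by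
  classical
  have h1 : ∀ F : Fin n × Fin n → Bool,
      Nat.card {τ : Equiv.Perm (Fin n) // IsDirHamPathOf n (TofF F) τ}
        = (Finset.univ.filter fun τ => IsDirHamPathOf n (TofF F) τ).card := by
    intro F
    rw [Nat.card_eq_fintype_card, Fintype.card_subtype]
  simp_rw [h1, Finset.card_filter]
  rw [Finset.sum_comm]
  have h2 : ∀ τ : Equiv.Perm (Fin n),
      (∑ F : Fin n × Fin n → Bool, if IsDirHamPathOf n (TofF F) τ then 1 else 0)
        = 2 ^ (n * n - (n - 1)) := by
    intro τ
    rw [← Finset.card_filter, ← Fintype.card_subtype, ← Nat.card_eq_fintype_card]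
    exact count_ham τ
  simp_rw [h2]
  simp [Finset.card_univ, Fintype.card_perm, mul_comm]

lemma exists_good :
    ∃ F : Fin n × Fin n → Bool, n.factorial ≤
      Nat.card {τ : Equiv.Perm (Fin n) // IsDirHamPathOf n (TofF F) τ} * 2 ^ (n - 1) := by
  classical
  have key := Finset.exists_le_of_sum_le (s := (Finset.univ : Finset (Fin n × Fin n → Bool)))
    (f := fun _ => n.factorial * 2 ^ (n * n - (n - 1)))
    (g := fun F =>
      Nat.card {τ : Equiv.Perm (Fin n) // IsDirHamPathOf n (TofF F) τ} * 2 ^ (n * n))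
    Finset.univ_nonempty ?_
  · obtain ⟨F, _, hF⟩ := key
    refine ⟨F, ?_⟩
    have h2 : 2 ^ (n * n) = 2 ^ (n - 1) * 2 ^ (n * n - (n - 1)) := by
      rw [← pow_add]
      congr 1
      have := sub_one_le_sq (n := n)
      omega
    rw [h2] at hF
    simp only [← mul_assoc] at hF
    exact Nat.le_of_mul_le_mul_right hF (by positivity)
  · rw [Finset.sum_const, ← Finset.sum_mul, sum_count]
    have hcardΩ : Fintype.card (Fin n × Fin n → Bool) = 2 ^ (n * n) := by
      simp [Fintype.card_fun]
    rw [Finset.card_univ, hcardΩ, smul_eq_mul]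
    ring_nf
    omega

lemma arc_T {T : Fin n → Fin n → Prop} {τ : Equiv.Perm (Fin n)}
    (hT : IsDirHamPathOf n T τ) {u v : Fin n} (h : (u, v) ∈ dirArcs n τ) : T u v := by
  obtain ⟨i, hi, heq⟩ := h
  simp only [Prod.mk.injEq] at heq
  obtain ⟨rfl, rfl⟩ := heq
  exact hT i hi

end SzeleAux

/-- Szele: some tournament on `n` vertices contains at least `n!/2^(n-1)` directed
Hamilton paths; consequently, any family of directed Hamilton paths of the complete
symmetric digraph on `n` vertices whose pairwise unions each contain a directed 2-cycle
has cardinality at most `2^(n-1)`. -/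
theorem szele_and_two_cycle_family_upper_bound (n : ℕ) :
    (∃ T : Fin n → Fin n → Prop, IsTournament n T ∧
      (Nat.factorial n : ℝ) / 2 ^ (n - 1)
        ≤ (Nat.card {τ : Equiv.Perm (Fin n) // IsDirHamPathOf n T τ} : ℝ)) ∧
    (∀ F : Finset (Equiv.Perm (Fin n)),
      (∀ τ ∈ F, ∀ φ ∈ F, τ ≠ φ → TwoCycleInUnion n τ φ) → F.card ≤ 2 ^ (n - 1)) := by
  classical
  constructor
  · obtain ⟨F, hF⟩ := SzeleAux.exists_good (n := n)
    refine ⟨SzeleAux.TofF F, SzeleAux.tournament_TofF F, ?_⟩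
    rw [div_le_iff₀ (by positivity)]
    exact_mod_cast hF
  · intro Fam hFam
    set S : Equiv.Perm (Fin n) → Finset (Fin n × Fin n → Bool) :=
      fun τ => Finset.univ.filter fun F => IsDirHamPathOf n (SzeleAux.TofF F) τ with hS
    have hcard : ∀ τ, (S τ).card = 2 ^ (n * n - (n - 1)) := by
      intro τ
      rw [hS, ← Fintype.card_subtype, ← Nat.card_eq_fintype_card]
      exact SzeleAux.count_ham τ
    have hdisj : ∀ τ ∈ Fam, ∀ φ ∈ Fam, τ ≠ φ → Disjoint (S τ) (S φ) := by
      intro τ hτ φ hφ hne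
      rw [Finset.disjoint_left]
      intro F hFτ hFφ
      rw [hS] at hFτ hFφ
      simp only [Finset.mem_filter, Finset.mem_univ, true_and] at hFτ hFφ
      obtain ⟨u, v, huv, h1, h2⟩ := hFam τ hτ φ hφ hne
      have Tuv : SzeleAux.TofF F u v := by
        rcases h1 with h | h
        · exact SzeleAux.arc_T hFτ h
        · exact SzeleAux.arc_T hFφ h
      have Tvu : SzeleAux.TofF F v u := by
        rcases h2 with h | h
        · exact SzeleAux.arc_T hFτ h
        · exact SzeleAux.arc_T hFφ h
      exact ((SzeleAux.tournament_TofF F).2 u v huv).1 Tuv Tvu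
    have hsum : Fam.card * 2 ^ (n * n - (n - 1)) ≤ 2 ^ (n * n) := by
      calc Fam.card * 2 ^ (n * n - (n - 1)) = ∑ τ ∈ Fam, (S τ).card := by
            simp [hcard, Finset.sum_const, mul_comm]
        _ = (Fam.biUnion S).card := (Finset.card_biUnion hdisj).symm
        _ ≤ Fintype.card (Fin n × Fin n → Bool) := Finset.card_le_univ _
        _ = 2 ^ (n * n) := by simp [Fintype.card_fun]
    have h2 : 2 ^ (n * n) = 2 ^ (n - 1) * 2 ^ (n * n - (n - 1)) := by
      rw [← pow_add]
      congr 1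
      have := SzeleAux.sub_one_le_sq (n := n)
      omega
    rw [h2] at hsum
    exact Nat.le_of_mul_le_mul_right hsum (by positivity)
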